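/- Let A be an NFA. If there exist a state p reachable from an initial state, a word u ≠ ε, two distinct runs π₁ ≠ π₂ from p to p both labeled u, and a path from p to a final state, then A has exponential ambiguity: there exists c > 1 and infinitely many words w such that the number of accepting runs of A on w is at least c^{|w|}. -/

import Mathlib

/-- A nondeterministic finite automaton. -/
structure NFA' (α Q : Type*) where
  start : Set Q
  accept : Set Q
  step : Q → α → Q → Prop

/-- `IsRunFrom M p w ts q`: `ts` is a sequence of transitions of `M` forming a
run from `p` to `q` labelled by the word `w`. -/
def IsRunFrom {α Q : Type*} (M : NFA' α Q) (p : Q) (w : List α)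
    (ts : List (Q × α × Q)) (q : Q) : Prop :=
  ts.map (fun t => t.2.1) = w ∧
  (∀ t ∈ ts, M.step t.1 t.2.1 t.2.2) ∧
  List.Chain' (fun s t => s.2.2 = t.1) ts ∧
  (∀ t, ts.head? = some t → t.1 = p) ∧
  (∀ t, ts.getLast? = some t → t.2.2 = q) ∧
  (ts = [] → p = q)

/-- An accepting run of `M` on `w`, given as a start state, a transition
sequence and an end state. -/
def IsAccRun {α Q : Type*} (M : NFA' α Q) (w : List α)
    (r : Q × List (Q × α × Q) × Q) : Prop :=
  r.1 ∈ M.start ∧ r.2.2 ∈ M.accept ∧ IsRunFrom M r.1 w r.2.1 r.2.2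

/-! Reading `w₀ uᵏ w₁`, an accepting run may traverse each of the `k` copies of `u` either
along `π₁` or along `π₂`; these `2ᵏ` runs are distinct because all blocks have length `|u|`.
Since `|w₀ uᵏ w₁| ≤ N k` with `N = |w₀| + |u| + |w₁|`, this gives at least `(2^(1/N))^|w|`
accepting runs on each of these infinitely many words. -/

open Function

namespace IsRunFrom

variable {α Q : Type*} {M : NFA' α Q} {p q r : Q} {u w w' : List α}
  {ts ts' : List (Q × α × Q)}

theorem length_eq (h : IsRunFrom M p w ts q) : ts.length = w.length := by
  rw [← h.1, List.length_map]

theorem nil (M : NFA' α Q) (p : Q) : IsRunFrom M p [] [] p :=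
  ⟨rfl, by simp, List.isChain_nil, by simp, by simp, fun _ => rfl⟩

theorem append (h : IsRunFrom M p w ts q) (h' : IsRunFrom M q w' ts' r) :
    IsRunFrom M p (w ++ w') (ts ++ ts') r := by
  obtain ⟨hm, hs, hc, hh, hl, he⟩ := h
  obtain ⟨hm', hs', hc', hh', hl', he'⟩ := h'
  refine ⟨by simp [← hm, ← hm'], ?_, ?_, ?_, ?_, ?_⟩
  · intro t ht
    rcases List.mem_append.1 ht with h | h
    exacts [hs t h, hs' t h]
  · show List.IsChain _ (ts ++ ts')
    rw [List.isChain_append]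
    refine ⟨hc, hc', ?_⟩
    intro x hx y hy
    rw [hl x (Option.mem_def.mp hx), hh' y (Option.mem_def.mp hy)]
  · intro t ht
    cases ts with
    | nil => exact (he rfl) ▸ hh' t (by simpa using ht)
    | cons a l => exact hh t (by simpa using ht)
  · intro t ht
    rcases eq_or_ne ts' [] with rfl | hne'
    · rw [List.append_nil] at ht
      rw [hl t ht, he' rfl]
    · rw [List.getLast?_append, Option.or_eq_some_iff] at ht
      rcases ht with ht | ⟨htn, ht⟩
      · exact hl' t ht
      · exact absurd (List.getLast?_eq_none_iff.mp htn) hne'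
  · intro h
    rw [List.append_eq_nil_iff] at h
    exact (he h.1).trans (he' h.2)

theorem flatten_loops :
    ∀ L : List (List (Q × α × Q)), (∀ x ∈ L, IsRunFrom M p u x p) →
      IsRunFrom M p (List.replicate L.length u).flatten L.flatten p
  | [], _ => nil M p
  | x :: L, h => by
    simp only [List.length_cons, List.replicate_succ, List.flatten_cons]
    exact (h x List.mem_cons_self).append
      (flatten_loops L fun y hy => h y (List.mem_cons_of_mem _ hy))

end IsRunFrom

theorem List.flatten_ofFn_comp_injective {β γ : Type*} {g : β → List γ} (hg : Injective g)
    {n : ℕ} (hlen : ∀ b, (g b).length = n) (k : ℕ) :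
    Injective fun b : Fin k → β => (List.ofFn (g ∘ b)).flatten := by
  intro b b' h
  have hblocks : List.ofFn (g ∘ b) = List.ofFn (g ∘ b') :=
    List.eq_iff_flatten_eq.2 ⟨h, by simp [List.map_ofFn, Function.comp_def, hlen]⟩
  exact hg.comp_left (List.ofFn_injective hblocks)

section Counting

variable {α Q : Type*} [Finite Q]

/-- A transition sequence is determined by its label and its list of (source, target) pairs. -/
theorem finite_setOf_map_label_eq (w : List α) :
    {ts : List (Q × α × Q) | ts.map (fun t => t.2.1) = w}.Finite := by
  refine Set.Finite.of_finite_image (f := List.map fun t => (t.1, t.2.2))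
    ((List.finite_length_eq (Q × Q) w.length).subset ?_) ?_
  · rintro _ ⟨ts, rfl, rfl⟩
    simp
  · intro ts hts ts' hts' h
    have hzip := congrArg₂ List.zip h (hts.trans hts'.symm)
    rw [List.zip_map', List.zip_map'] at hzip
    refine List.map_injective_iff.2 ?_ hzip
    rintro ⟨a, b, c⟩ ⟨a', b', c'⟩ habc
    simp_all

theorem finite_setOf_isAccRun (M : NFA' α Q) (w : List α) :
    {r | IsAccRun M w r}.Finite := by
  refine (Set.finite_univ.prod ((finite_setOf_map_label_eq w).prod Set.finite_univ)).subset ?_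
  rintro ⟨q, ts, q'⟩ ⟨-, -, hrun⟩
  exact ⟨trivial, hrun.1, trivial⟩

theorem two_pow_le_card_isAccRun {M : NFA' α Q} {p qI qF : Q} {w₀ w₁ u : List α}
    {t₀ t₁ π₁ π₂ : List (Q × α × Q)} (hqI : qI ∈ M.start) (h₀ : IsRunFrom M qI w₀ t₀ p)
    (h₁ : IsRunFrom M p u π₁ p) (h₂ : IsRunFrom M p u π₂ p) (hne : π₁ ≠ π₂)
    (hqF : qF ∈ M.accept) (h₃ : IsRunFrom M p w₁ t₁ qF) (k : ℕ) :
    2 ^ k ≤ Nat.card {r // IsAccRun M (w₀ ++ (List.replicate k u).flatten ++ w₁) r} := by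
  let loop : Bool → List (Q × α × Q) := fun b => cond b π₁ π₂
  have hloop : Injective loop := by
    intro a b
    cases a <;> cases b <;> simp [loop, hne, hne.symm]
  have hrun : ∀ b, IsRunFrom M p u (loop b) p := fun b => by cases b <;> assumption
  have hloops : ∀ b : Fin k → Bool,
      IsRunFrom M p (List.replicate k u).flatten (List.ofFn (loop ∘ b)).flatten p := fun b => by
    simpa using IsRunFrom.flatten_loops (List.ofFn (loop ∘ b))
      (List.forall_mem_ofFn_iff.2 fun i => hrun (b i))
  let F : (Fin k → Bool) → {r // IsAccRun M (w₀ ++ (List.replicate k u).flatten ++ w₁) r} :=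
    fun b => ⟨(qI, t₀ ++ (List.ofFn (loop ∘ b)).flatten ++ t₁, qF), hqI, hqF,
      (h₀.append (hloops b)).append h₃⟩
  have hF : Injective F := fun b b' h =>
    List.flatten_ofFn_comp_injective hloop (fun b => (hrun b).length_eq) k
      (List.append_cancel_left (List.append_cancel_right (congrArg (fun r => r.1.2.1) h)))
  have : Finite {r // IsAccRun M (w₀ ++ (List.replicate k u).flatten ++ w₁) r} :=
    (finite_setOf_isAccRun M _).to_subtype
  calc 2 ^ k = Nat.card (Fin k → Bool) := by simp
    _ ≤ _ := Nat.card_le_card_of_injective F hF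

end Counting

theorem exists_one_lt_infinite_setOf_pow_length_le {α : Type*} {g : List α → ℕ}
    {f : ℕ → List α} (hf : Injective f) {N : ℕ} (hN : N ≠ 0)
    (hlen : ∀ k, 1 ≤ k → (f k).length ≤ N * k) (hg : ∀ k, 2 ^ k ≤ g (f k)) :
    ∃ c : ℝ, 1 < c ∧ {w | c ^ w.length ≤ (g w : ℝ)}.Infinite := by
  set c : ℝ := 2 ^ (N⁻¹ : ℝ)
  have hc : 1 < c := Real.one_lt_rpow one_lt_two (by positivity)
  refine ⟨c, hc, ((Set.Ici_infinite 1).image hf.injOn).mono ?_⟩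
  rintro _ ⟨k, hk, rfl⟩
  calc c ^ (f k).length ≤ c ^ (N * k) := pow_le_pow_right₀ hc.le (hlen k hk)
    _ = 2 ^ k := by rw [pow_mul, Real.rpow_inv_natCast_pow zero_le_two hN]
    _ ≤ g (f k) := by exact_mod_cast hg k

/-- If some state `p` is reachable from an initial state, carries two distinct
runs `π₁ ≠ π₂` from `p` to `p` both labelled by the same nonempty word `u`, and
reaches a final state, then the NFA has exponential ambiguity: there are `c > 1`
and infinitely many words `w` whose number of accepting runs is at least `c^|w|`. -/
theorem exponential_ambiguity {α Q : Type*} [Fintype Q] (M : NFA' α Q)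
    (p qI qF : Q) (w₀ w₁ u : List α) (t₀ t₁ π₁ π₂ : List (Q × α × Q))
    (hu : u ≠ []) (hqI : qI ∈ M.start) (h₀ : IsRunFrom M qI w₀ t₀ p)
    (h₁ : IsRunFrom M p u π₁ p) (h₂ : IsRunFrom M p u π₂ p) (hne : π₁ ≠ π₂)
    (hqF : qF ∈ M.accept) (h₃ : IsRunFrom M p w₁ t₁ qF) :
    ∃ c : ℝ, 1 < c ∧
      Set.Infinite { w : List α |
        c ^ w.length ≤ (Nat.card {r : Q × List (Q × α × Q) × Q // IsAccRun M w r} : ℝ) } := by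
  set W : ℕ → List α := fun k => w₀ ++ (List.replicate k u).flatten ++ w₁
  have hu₀ : 0 < u.length := List.length_pos_iff.2 hu
  have hWlen : ∀ k, (W k).length = w₀.length + w₁.length + k * u.length := by
    intro k
    simp only [W, List.length_append, List.length_flatten, List.map_replicate,
      List.sum_replicate, smul_eq_mul]
    ring
  have hW : Injective W := fun a b h => Nat.eq_of_mul_eq_mul_right hu₀ <| by
    have := congrArg List.length h
    rw [hWlen, hWlen] at this
    omega
  refine exists_one_lt_infinite_setOf_pow_length_le hW
    (N := w₀.length + w₁.length + u.length) (by omega) (fun k hk => ?_)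
    (two_pow_le_card_isAccRun hqI h₀ h₁ h₂ hne hqF h₃)
  rw [hWlen]
  nlinarith
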